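/- arXiv:1603.07768 — 3 statements merged into one kernel-verified Lean document; each statement's English description precedes it below -/
import Mathlib

section
/- Let K be a finite set, t ⊆ K, r : K → ℝ≥0, and g : K → [0,1] with g(k) = 1 for all k ∉ t. Set γ(k) = (e^(g(k)) - 1)/(e - 1) and ρ = e/(e-1). Then Σ_{k∈K} γ(k)·r_t(k) + ρ·Σ_{k∈t}(1 - e^(g(k)-1))·r(k) ≥ Σ_{k∈K} r_t(k), where r_t(k) = r(k) if k ∈ t and 0 otherwise. -/
open Finset

/-- Core dual feasibility inequality: with γ(k) = (e^(g k) - 1)/(e-1), ρ = e/(e-1),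
g(k) = 1 for k ∉ t and g(k) ∈ [0,1], and r_t the revenue restricted to type t,
Σ_{k∈K} γ(k)·r_t(k) + ρ·Σ_{k∈t}(1 - e^(g k - 1))·r(k) ≥ Σ_{k∈K} r_t(k). -/
theorem stmt_9 {ι : Type*} [DecidableEq ι] (K : Finset ι) (t : Finset ι) (ht : t ⊆ K)
    (r : ι → ℝ) (hr : ∀ k, 0 ≤ r k)
    (g : ι → ℝ) (hg01 : ∀ k ∈ K, g k ∈ Set.Icc (0:ℝ) 1)
    (hginactive : ∀ k ∈ K, k ∉ t → g k = 1)
    (γ : ι → ℝ) (hγ : ∀ k, γ k = (Real.exp (g k) - 1) / (Real.exp 1 - 1))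
    (ρ : ℝ) (hρ : ρ = Real.exp 1 / (Real.exp 1 - 1))
    (rt : ι → ℝ) (hrt : ∀ k, rt k = if k ∈ t then r k else 0) :
    ∑ k ∈ K, γ k * rt k + ρ * ∑ k ∈ t, (1 - Real.exp (g k - 1)) * r k
      ≥ ∑ k ∈ K, rt k := by
  have he : Real.exp 1 - 1 ≠ 0 := by
    have := Real.exp_one_gt_d9; nlinarith
  have hK1 : ∀ (f : ι → ℝ), ∑ k ∈ K, f k * rt k = ∑ k ∈ t, f k * r k := by
    intro f
    rw [← Finset.sum_subset ht]
    · exact Finset.sum_congr rfl fun k hk => by simp [hrt, hk]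
    · intro k _ hk; simp [hrt, hk]
  have h1 : ∑ k ∈ K, γ k * rt k = ∑ k ∈ t, γ k * r k := hK1 γ
  have h2 : ∑ k ∈ K, rt k = ∑ k ∈ t, r k := by
    have := hK1 (fun _ => 1); simpa using this
  rw [h1, h2, Finset.mul_sum, ← Finset.sum_add_distrib]
  apply le_of_eq
  apply Finset.sum_congr rfl
  intro k hk
  have hexp : Real.exp (g k - 1) = Real.exp (g k) / Real.exp 1 := by
    rw [Real.exp_sub]
  have hepos : Real.exp 1 ≠ 0 := (Real.exp_pos 1).ne'
  rw [hγ, hρ, hexp]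
  field_simp
  ring
end

section
/- Let S be a laminar family on ground set K with singletons, viewed as a forest. Suppose sets L(s), T(s) ⊆ 𝒫(K) partition the singleton-descendants of s: every singleton {k} with k ∈ s is either in L(s) or a descendant of exactly one member of T(s). Then after the Event 2 update (removing s' from T(s), adding T(s') to T(s) and L(s') to L(s)), the partition property is preserved, provided L(s') and T(s') partition the singleton-descendants of s'. -/
open Finset

/-- `PartitionsDesc s L T` says L and T partition the singleton-descendants of s:
each k ∈ s either has {k} ∈ L (and lies in no member of T), or {k} ∉ L and k lies in
exactly one member of T. -/
def PartitionsDesc {K : Type*} [DecidableEq K] (s : Finset K)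
    (L T : Finset (Finset K)) : Prop :=
  ∀ k ∈ s, ({k} ∈ L ∧ ∀ w ∈ T, k ∉ w) ∨ ({k} ∉ L ∧ ∃! w, w ∈ T ∧ k ∈ w)

/-- Event 2 update preserves the partition invariant: if L(s), T(s) partition the
singleton-descendants of s, s' ∈ T(s), and L(s'), T(s') partition those of s' (with
members of L(s') singletons of elements of s', members of T(s') proper subsets of s'),
then L(s) ∪ L(s') and (T(s) \ {s'}) ∪ T(s') partition the singleton-descendants of s. -/
theorem stmt_11 {K : Type*} [DecidableEq K] (s s' : Finset K)
    (L T L' T' : Finset (Finset K))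
    (hpart : PartitionsDesc s L T)
    (hs'T : s' ∈ T) (hs'sub : s' ⊆ s)
    (hpart' : PartitionsDesc s' L' T')
    (hL' : ∀ w ∈ L', ∃ k ∈ s', w = {k})
    (hT' : ∀ w ∈ T', w ⊆ s' ∧ w ≠ s') :
    PartitionsDesc s (L ∪ L') ((T.erase s') ∪ T') := by
  intro k hk
  have hnotL' : k ∉ s' → {k} ∉ L' := by
    intro hks hmem
    obtain ⟨j, hj, hjeq⟩ := hL' _ hmem
    have : k = j := Finset.singleton_injective hjeq
    exact hks (this ▸ hj)
  rcases hpart k hk with ⟨hkL, hnoT⟩ | ⟨hknL, w, ⟨hwT, hkw⟩, huniq⟩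
  · -- k ∈ no member of T, in particular k ∉ s'
    left
    refine ⟨Finset.mem_union_left _ hkL, ?_⟩
    intro w hw
    rcases Finset.mem_union.mp hw with hw | hw
    · exact hnoT _ (Finset.mem_of_mem_erase hw)
    · intro hkw
      exact hnoT s' hs'T ((hT' w hw).1 hkw)
  · by_cases hws' : w = s'
    · subst hws'
      have hks' : k ∈ w := hkw
      rcases hpart' k hks' with ⟨hkL', hnoT'⟩ | ⟨hknL', u, ⟨huT', hku⟩, huniq'⟩
      · left
        refine ⟨Finset.mem_union_right _ hkL', ?_⟩
        intro u hu
        rcases Finset.mem_union.mp hu with hu | hu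
        · intro hku
          exact (Finset.ne_of_mem_erase hu) (huniq u ⟨Finset.mem_of_mem_erase hu, hku⟩)
        · exact hnoT' _ hu
      · right
        refine ⟨?_, u, ⟨Finset.mem_union_right _ huT', hku⟩, ?_⟩
        · intro h
          rcases Finset.mem_union.mp h with h | h
          · exact hknL h
          · exact hknL' h
        · rintro v ⟨hv, hkv⟩
          rcases Finset.mem_union.mp hv with hv | hv
          · exact absurd (huniq v ⟨Finset.mem_of_mem_erase hv, hkv⟩)
              (Finset.ne_of_mem_erase hv)
          · exact huniq' v ⟨hv, hkv⟩
    · have hks' : k ∉ s' := fun h => hws' ((huniq s' ⟨hs'T, h⟩).symm ▸ rfl)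
      right
      refine ⟨?_, w, ⟨Finset.mem_union_left _ (Finset.mem_erase.mpr ⟨hws', hwT⟩), hkw⟩, ?_⟩
      · intro h
        rcases Finset.mem_union.mp h with h | h
        · exact hknL h
        · exact hnotL' hks' h
      · rintro v ⟨hv, hkv⟩
        rcases Finset.mem_union.mp hv with hv | hv
        · exact huniq v ⟨Finset.mem_of_mem_erase hv, hkv⟩
        · exact absurd ((hT' v hv).1 hkv) hks'
end

section
/- Let K be a finite set, t ⊆ K the active dimensions, r : K → ℝ≥0, g : K → [0,1] with g(k) = 1 for k ∉ t, ĝ : K → [0,1] with ĝ(k) ≤ g(k) for k ∈ t, and ρ = e/(e-1). Then Σ_{k∉t} r(k) + ρ·Σ_{k∈t}(e^(g(k)-1) - 1/e)·r(k) + ρ·Σ_{k∈t}(1 - e^(ĝ(k)-1))·r'(k) ≥ Σ_{k∈K} r(k), whenever r'(k) ≥ r(k) for all k ∈ t. -/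
open Finset

/-- Full dual feasibility chain: with g(k) = 1 off t, ghat ≤ g and r' ≥ r on t, and
ρ = e/(e-1),
Σ_{k∉t} r(k) + ρ·Σ_{k∈t}(e^(g k -1) - 1/e)·r(k) + ρ·Σ_{k∈t}(1 - e^(ghat k -1))·r'(k)
  ≥ Σ_{k∈K} r(k). -/
theorem stmt_16 {ι : Type*} [DecidableEq ι] (K t : Finset ι) (ht : t ⊆ K)
    (r r' : ι → ℝ) (hr : ∀ k, 0 ≤ r k) (hr' : ∀ k ∈ t, r k ≤ r' k)
    (g ghat : ι → ℝ) (hg : ∀ k ∈ K, g k ∈ Set.Icc (0:ℝ) 1)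
    (hghat : ∀ k ∈ K, ghat k ∈ Set.Icc (0:ℝ) 1)
    (hginactive : ∀ k ∈ K, k ∉ t → g k = 1)
    (hle : ∀ k ∈ t, ghat k ≤ g k)
    (ρ : ℝ) (hρ : ρ = Real.exp 1 / (Real.exp 1 - 1)) :
    ∑ k ∈ K \ t, r k + ρ * ∑ k ∈ t, (Real.exp (g k - 1) - 1 / Real.exp 1) * r k
      + ρ * ∑ k ∈ t, (1 - Real.exp (ghat k - 1)) * r' k
      ≥ ∑ k ∈ K, r k := by
  have he1 : (1:ℝ) < Real.exp 1 := by
    have := Real.exp_one_gt_d9; linarith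
  have hρ1 : ρ * (1 - 1 / Real.exp 1) = 1 := by
    have hne : Real.exp 1 - 1 ≠ 0 := by linarith
    rw [hρ, div_mul_eq_mul_div, div_eq_one_iff_eq hne]
    field_simp
  rw [ge_iff_le, ← Finset.sum_sdiff ht]
  have key : ∑ k ∈ t, r k ≤
      ρ * ∑ k ∈ t, (Real.exp (g k - 1) - 1 / Real.exp 1) * r k
      + ρ * ∑ k ∈ t, (1 - Real.exp (ghat k - 1)) * r' k := by
    rw [← mul_add, ← Finset.sum_add_distrib]
    calc ∑ k ∈ t, r k
        = ∑ k ∈ t, ρ * ((1 - 1 / Real.exp 1) * r k) := by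
          refine Finset.sum_congr rfl fun k _ => ?_
          rw [← mul_assoc, hρ1, one_mul]
      _ ≤ _ := by
          rw [← Finset.mul_sum]
          refine mul_le_mul_of_nonneg_left (Finset.sum_le_sum fun k hk => ?_)
            (le_of_lt (by rw [hρ]; exact div_pos (Real.exp_pos 1) (by linarith)))
          have hkK := ht hk
          have hg1 : g k ≤ 1 := (hg k hkK).2
          have hg0 : 0 ≤ g k := (hg k hkK).1
          have h1 : Real.exp (g k - 1) ≤ 1 := by
            simpa using Real.exp_le_exp.mpr (show g k - 1 ≤ (0:ℝ) by linarith)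
          have h2 : 1 / Real.exp 1 ≤ Real.exp (g k - 1) := by
            rw [one_div, ← Real.exp_neg]
            exact Real.exp_le_exp.mpr (by linarith)
          have h3 : Real.exp (ghat k - 1) ≤ Real.exp (g k - 1) :=
            Real.exp_le_exp.mpr (by linarith [hle k hk])
          have h4 : (1 - Real.exp (g k - 1)) * r k ≤ (1 - Real.exp (ghat k - 1)) * r' k := by
            have := hr' k hk
            have := hr k
            nlinarith
          nlinarith [hr k]
  linarith
end
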